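/- Let X be a connected smooth manifold without boundary, M a smooth manifold without boundary, and let a group G act on X with each g ∈ G acting as a diffeomorphism. Let π : X → M be a smooth map satisfying π(g • x) = π(x) for all g ∈ G and x ∈ X. Let ω be a 1-form on M (an assignment to each p ∈ M of a continuous linear map ω_p : T_pM → ℝ) and let f : X → ℝ be a smooth function whose differential equals the pullback of ω, i.e., for all x ∈ X and all tangent vectors v ∈ T_xX one has (mfderiv f x)(v) = ω_{π(x)}((mfderiv π x)(v)). Then for every fixed g ∈ G there exists a constant c ∈ ℝ such that f(g • x) − f(x) = c for all x ∈ X. -/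

import Mathlib

open Manifold

/-!
Fix `g`, let `σ x = g • x` and `h = f ∘ σ - f`. Since `π ∘ σ = π`, the chain rule gives
`d(f ∘ σ)_x = ω_{π x} ∘ dπ_{σ x} ∘ dσ_x = ω_{π x} ∘ d(π ∘ σ)_x = df_x`, so `dh = 0`.
Read in a chart, `h` has zero Fréchet derivative on an open subset of the model space, hence
is locally constant; as `X` is connected, `h` is constant.
-/

section

variable {𝕜 : Type*} [NontriviallyNormedField 𝕜]
  {E : Type*} [NormedAddCommGroup E] [NormedSpace 𝕜 E]
  {H : Type*} [TopologicalSpace H] {I : ModelWithCorners 𝕜 E H}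
  {E' : Type*} [NormedAddCommGroup E'] [NormedSpace 𝕜 E']
  {H' : Type*} [TopologicalSpace H'] {J : ModelWithCorners 𝕜 E' H'}
  {F : Type*} [NormedAddCommGroup F] [NormedSpace 𝕜 F]
  {X : Type*} [TopologicalSpace X] [ChartedSpace H X]
  {M : Type*} [TopologicalSpace M] [ChartedSpace H' M]

theorem mfderiv_comp_eq_of_eq_pullback {f : X → F} {π : X → M}
    {ω : (p : M) → TangentSpace J p →L[𝕜] F}
    (hdf : ∀ (x : X) (v : TangentSpace I x),
      mfderiv I 𝓘(𝕜, F) f x v = ω (π x) (mfderiv I J π x v))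
    {σ : X → X} (hπσ : π ∘ σ = π) {x : X}
    (hf : MDifferentiableAt I 𝓘(𝕜, F) f (σ x)) (hπ : MDifferentiableAt I J π (σ x))
    (hσ : MDifferentiableAt I I σ x) :
    mfderiv I 𝓘(𝕜, F) (f ∘ σ) x = mfderiv I 𝓘(𝕜, F) f x := by
  ext v
  rw [mfderiv_comp x hf hσ, ContinuousLinearMap.comp_apply, hdf,
    ← ContinuousLinearMap.comp_apply (mfderiv I J π (σ x)),
    ← mfderiv_comp x hπ hσ]
  change ω ((π ∘ σ) x) (mfderiv I J (π ∘ σ) x v) = _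
  rw [hπσ]
  exact (hdf x v).symm

end

theorem isLocallyConstant_of_hasMFDerivAt_zero
    {E : Type*} [NormedAddCommGroup E] [NormedSpace ℝ E]
    {H : Type*} [TopologicalSpace H] {I : ModelWithCorners ℝ E H} [I.Boundaryless]
    {F : Type*} [NormedAddCommGroup F] [NormedSpace ℝ F]
    {X : Type*} [TopologicalSpace X] [ChartedSpace H X] [IsManifold I 1 X]
    {f : X → F} (hf : ∀ x, HasMFDerivAt I 𝓘(ℝ, F) f x 0) :
    IsLocallyConstant f := by
  refine (IsLocallyConstant.iff_eventually_eq f).2 fun x₀ ↦ ?_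
  set e := extChartAt I x₀
  have he : ∀ y ∈ e.target, HasFDerivAt (f ∘ e.symm) (0 : E →L[ℝ] F) y := fun y hy ↦ by
    have hsymm : MDifferentiableAt 𝓘(ℝ, E) I e.symm y := by
      rw [← mdifferentiableWithinAt_univ, ← I.range_eq_univ]
      exact mdifferentiableWithinAt_extChartAt_symm hy
    have hcomp : HasMFDerivAt 𝓘(ℝ, E) 𝓘(ℝ, F) (f ∘ e.symm) y 0 := by
      simpa only [ContinuousLinearMap.zero_comp] using (hf (e.symm y)).comp y hsymm.hasMFDerivAt
    exact hasMFDerivAt_iff_hasFDerivAt.1 hcomp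
  have hopen : IsOpen (e.target ∩ (f ∘ e.symm) ⁻¹' {f x₀}) :=
    (isOpen_extChartAt_target x₀).isOpen_inter_preimage_of_fderiv_eq_zero
      (fun y hy ↦ (he y hy).differentiableAt.differentiableWithinAt)
      (fun y hy ↦ (he y hy).fderiv) _
  have hmem : e x₀ ∈ e.target ∩ (f ∘ e.symm) ⁻¹' {f x₀} :=
    ⟨mem_extChartAt_target x₀, congrArg f (extChartAt_to_inv x₀)⟩
  filter_upwards [extChartAt_source_mem_nhds (I := I) x₀,
    (continuousAt_extChartAt x₀).preimage_mem_nhds (hopen.mem_nhds hmem)] with y hy hy'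
  obtain ⟨-, hfy⟩ := hy'
  rwa [Set.mem_preimage, Function.comp_apply, e.left_inv hy, Set.mem_singleton_iff] at hfy

theorem additive_of_pullback_oneForm_general
    {E : Type*} [NormedAddCommGroup E] [NormedSpace ℝ E]
    {H : Type*} [TopologicalSpace H] (I : ModelWithCorners ℝ E H) [I.Boundaryless]
    {E' : Type*} [NormedAddCommGroup E'] [NormedSpace ℝ E']
    {H' : Type*} [TopologicalSpace H'] (J : ModelWithCorners ℝ E' H')
    {X : Type*} [TopologicalSpace X] [ChartedSpace H X] [IsManifold I (⊤ : ℕ∞) X]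
    [ConnectedSpace X]
    {M : Type*} [TopologicalSpace M] [ChartedSpace H' M]
    {G : Type*} [Group G] [MulAction G X]
    (hact : ∀ g : G, ContMDiff I I (⊤ : ℕ∞) (fun x : X => g • x))
    (π : X → M) (hπ : ContMDiff I J (⊤ : ℕ∞) π)
    (hinv : ∀ (g : G) (x : X), π (g • x) = π x)
    (ω : (p : M) → TangentSpace J p →L[ℝ] ℝ)
    (f : X → ℝ) (hf : ContMDiff I 𝓘(ℝ) (⊤ : ℕ∞) f)
    (hdf : ∀ (x : X) (v : TangentSpace I x),
      mfderiv I 𝓘(ℝ) f x v = ω (π x) (mfderiv I J π x v)) :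
    ∀ g : G, ∃ c : ℝ, ∀ x : X, f (g • x) - f x = c := by
  intro g
  have hfd := hf.mdifferentiable (by simp)
  have hπd := hπ.mdifferentiable (by simp)
  have hσd := (hact g).mdifferentiable (by simp)
  have hzero : ∀ x, HasMFDerivAt I 𝓘(ℝ) (fun x ↦ f (g • x) - f x) x 0 := fun x ↦ by
    have hcomp := (hfd (g • x)).comp x (hσd x) |>.hasMFDerivAt
    rw [mfderiv_comp_eq_of_eq_pullback hdf (funext (hinv g)) (hfd _) (hπd _) (hσd x)] at hcomp
    have hsub : HasMFDerivAt I 𝓘(ℝ) (fun x ↦ f (g • x) - f x) x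
        (mfderiv I 𝓘(ℝ) f x - mfderiv I 𝓘(ℝ) f x) := hcomp.sub (hfd x).hasMFDerivAt
    rwa [sub_self] at hsub
  obtain ⟨x₀⟩ : Nonempty X := inferInstance
  exact ⟨_, fun x ↦
    (isLocallyConstant_of_hasMFDerivAt_zero hzero).apply_eq_of_preconnectedSpace x x₀⟩

/-- Lemma 2.3 (i): if `f : X → ℝ` is smooth with `df = π*ω` for a `G`-invariant
smooth map `π : X → M` (where `G` acts on the connected manifold `X` by
diffeomorphisms), then for every `g ∈ G` the function `x ↦ f (g • x) - f x`
is constant. -/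
theorem additive_of_pullback_oneForm
    {E : Type*} [NormedAddCommGroup E] [NormedSpace ℝ E]
    {H : Type*} [TopologicalSpace H] (I : ModelWithCorners ℝ E H) [I.Boundaryless]
    {E' : Type*} [NormedAddCommGroup E'] [NormedSpace ℝ E']
    {H' : Type*} [TopologicalSpace H'] (J : ModelWithCorners ℝ E' H') [J.Boundaryless]
    {X : Type*} [TopologicalSpace X] [ChartedSpace H X] [IsManifold I (⊤ : ℕ∞) X]
    [ConnectedSpace X]
    {M : Type*} [TopologicalSpace M] [ChartedSpace H' M] [IsManifold J (⊤ : ℕ∞) M]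
    {G : Type*} [Group G] [MulAction G X]
    (hact : ∀ g : G, ContMDiff I I (⊤ : ℕ∞) (fun x : X => g • x))
    (π : X → M) (hπ : ContMDiff I J (⊤ : ℕ∞) π)
    (hinv : ∀ (g : G) (x : X), π (g • x) = π x)
    (ω : (p : M) → TangentSpace J p →L[ℝ] ℝ)
    (f : X → ℝ) (hf : ContMDiff I 𝓘(ℝ) (⊤ : ℕ∞) f)
    (hdf : ∀ (x : X) (v : TangentSpace I x),
      mfderiv I 𝓘(ℝ) f x v = ω (π x) (mfderiv I J π x v)) :
    ∀ g : G, ∃ c : ℝ, ∀ x : X, f (g • x) - f x = c :=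
  additive_of_pullback_oneForm_general I J hact π hπ hinv ω f hf hdf
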